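/- arXiv:2602.02987 — 4 statements merged into one kernel-verified Lean document; each statement's English description precedes it below -/
import Mathlib

section
/- Let μ ∈ ℝ^I with all entries positive, and v ∈ ℝ^I with all entries positive and summing to 1. Let D = diag(μ₁,...,μ_I) and A = v μᵀ − D. Then every eigenvalue λ ∈ ℂ of A with λ ≠ 0 satisfies Re(λ) < 0. -/
open Matrix BigOperators Complex

/-- every nonzero complex eigenvalue of `A = v μᵀ − diag μ`
has strictly negative real part. -/
theorem nonzero_eigenvalues_neg_re
    (I : ℕ) (hI : 0 < I) (μ v : Fin I → ℝ)
    (hμ : ∀ i, 0 < μ i) (hv : ∀ i, 0 < v i) (hvsum : ∑ i, v i = 1)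
    (A : Matrix (Fin I) (Fin I) ℝ)
    (hA : A = Matrix.of (fun i j => v i * μ j) - Matrix.diagonal μ)
    (lam : ℂ) (hlam : lam ≠ 0)
    (heig : ∃ y : Fin I → ℂ, y ≠ 0 ∧
      (A.map (fun a : ℝ => (a : ℂ))).mulVec y = lam • y) :
    lam.re < 0 := by
  obtain ⟨y, hy, heq⟩ := heig
  subst hA
  set s : ℂ := ∑ j, (μ j : ℂ) * y j with hs
  have hk : ∀ i, (lam + (μ i : ℂ)) * y i = (v i : ℂ) * s := by
    intro i
    have h := congrFun heq i
    simp only [Matrix.mulVec, dotProduct, Matrix.map_apply, Matrix.sub_apply,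
      Matrix.diagonal_apply, Matrix.of_apply, Pi.smul_apply, smul_eq_mul] at h
    push_cast at h
    rw [Finset.sum_congr rfl (fun j _ => sub_mul _ _ (y j)), Finset.sum_sub_distrib] at h
    simp only [apply_ite (fun x : ℝ => (x : ℂ)), Complex.ofReal_zero, ite_mul, zero_mul,
      Finset.sum_ite_eq, Finset.mem_univ, if_true] at h
    have h2 : (∑ j, (v i : ℂ) * (μ j : ℂ) * y j) = (v i : ℂ) * s := by
      rw [hs, Finset.mul_sum]
      exact Finset.sum_congr rfl (fun j _ => by ring)
    rw [h2] at h
    linear_combination -h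
  by_cases hscase : s = 0
  · -- some y i ≠ 0, then lam = -μ i
    obtain ⟨i, hi⟩ := Function.ne_iff.mp hy
    have h := hk i
    rw [hscase, mul_zero] at h
    have : lam + (μ i : ℂ) = 0 := by
      rcases mul_eq_zero.mp h with h' | h'
      · exact h'
      · exact absurd h' hi
    have hl : lam = -(μ i : ℂ) := by linear_combination this
    rw [hl]
    simp [neg_re, Complex.ofReal_re]
    exact hμ i
  · by_contra hre
    push_neg at hre
    have hw : ∀ i, lam + (μ i : ℂ) ≠ 0 := by
      intro i h0
      have h := hk i
      rw [h0, zero_mul] at h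
      rcases mul_eq_zero.mp h.symm with h' | h'
      · exact (hv i).ne' (by exact_mod_cast h')
      · exact hscase h'
    have hyi : ∀ i, y i = (v i : ℂ) * s / (lam + (μ i : ℂ)) := by
      intro i
      rw [eq_div_iff (hw i)]
      linear_combination hk i
    have hsum1 : (∑ i, ((v i * μ i : ℝ) : ℂ) / (lam + (μ i : ℂ))) = 1 := by
      have h1 : s = s * ∑ i, ((v i * μ i : ℝ) : ℂ) / (lam + (μ i : ℂ)) := by
        conv_lhs => rw [hs]
        rw [Finset.mul_sum]
        refine Finset.sum_congr rfl (fun i _ => ?_)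
        rw [hyi i]
        push_cast
        field_simp
      have h2 : s * ((∑ i, ((v i * μ i : ℝ) : ℂ) / (lam + (μ i : ℂ))) - 1) = 0 := by
        linear_combination -h1
      rcases mul_eq_zero.mp h2 with h' | h'
      · exact absurd h' hscase
      · linear_combination h'
    have hre1 : (∑ i, (((v i * μ i : ℝ) : ℂ) / (lam + (μ i : ℂ))).re) = 1 := by
      rw [← Complex.re_sum, hsum1, Complex.one_re]
    have hne : lam.re ≠ 0 ∨ lam.im ≠ 0 := by
      by_contra h
      push_neg at h
      exact hlam (Complex.ext h.1 h.2)
    have key : ∀ i, (((v i * μ i : ℝ) : ℂ) / (lam + (μ i : ℂ))).re < v i := by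
      intro i
      have hwre : (lam + (μ i : ℂ)).re = lam.re + μ i := by simp
      have hwim : (lam + (μ i : ℂ)).im = lam.im := by simp
      have hnsq : 0 < Complex.normSq (lam + (μ i : ℂ)) := Complex.normSq_pos.mpr (hw i)
      rw [Complex.div_re, hwre, hwim]
      simp only [Complex.ofReal_re, Complex.ofReal_im, zero_mul, zero_div, add_zero]
      rw [Complex.normSq_apply, hwre, hwim] at hnsq ⊢
      rw [div_lt_iff₀ hnsq]
      have hμi := hμ i
      have hvi := hv i
      rcases hne with h | h
      · have hpos : 0 < lam.re := lt_of_le_of_ne hre (Ne.symm h)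
        nlinarith [mul_pos hvi (mul_pos hpos (show (0:ℝ) < lam.re + μ i by linarith)),
          mul_nonneg hvi.le (mul_self_nonneg lam.im)]
      · have him : 0 < lam.im * lam.im := mul_self_pos.mpr h
        nlinarith [mul_pos hvi him,
          mul_nonneg (mul_nonneg hvi.le hre) (show (0:ℝ) ≤ lam.re + μ i by linarith [hμ i])]
    have hlt : (∑ i, (((v i * μ i : ℝ) : ℂ) / (lam + (μ i : ℂ))).re) < ∑ i, v i := by
      have : (Finset.univ : Finset (Fin I)).Nonempty := ⟨⟨0, hI⟩, Finset.mem_univ _⟩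
      exact Finset.sum_lt_sum_of_nonempty this (fun i _ => key i)
    rw [hre1, hvsum] at hlt
    exact lt_irrefl 1 hlt
end

section
/- Let μ ∈ ℝ^I with all entries positive, v ∈ ℝ^I with positive entries summing to 1, and λ ∈ ℂ with λ ∉ {−μ₁,...,−μ_I}. Then λ is an eigenvalue of A = v μᵀ − diag(μ) if and only if ∑_{i=1}^I v_i μ_i/(λ + μ_i) = 1. -/
open Matrix BigOperators Complex

/-- for `λ` avoiding the points `−μ i`, `λ` is an eigenvalue of
`A = v μᵀ − diag μ` iff `∑ i, v i * μ i / (λ + μ i) = 1`. -/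
theorem eigenvalue_iff_characteristic_equation
    (I : ℕ) (hI : 0 < I) (μ v : Fin I → ℝ)
    (hμ : ∀ i, 0 < μ i) (hv : ∀ i, 0 < v i) (hvsum : ∑ i, v i = 1)
    (A : Matrix (Fin I) (Fin I) ℝ)
    (hA : A = Matrix.of (fun i j => v i * μ j) - Matrix.diagonal μ)
    (lam : ℂ) (hlam : ∀ i, lam ≠ -(μ i : ℂ)) :
    (∃ y : Fin I → ℂ, y ≠ 0 ∧
        (A.map (fun a : ℝ => (a : ℂ))).mulVec y = lam • y)
      ↔ ∑ i, (v i : ℂ) * (μ i : ℂ) / (lam + (μ i : ℂ)) = 1 := by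
  have hne : ∀ i, lam + (μ i : ℂ) ≠ 0 := by
    intro i h
    exact hlam i (by linear_combination h)
  have entry : ∀ (y : Fin I → ℂ) (i : Fin I),
      ((A.map (fun a : ℝ => (a : ℂ))).mulVec y) i
        = (v i : ℂ) * (∑ j, (μ j : ℂ) * y j) - (μ i : ℂ) * y i := by
    intro y i
    simp only [hA, mulVec, dotProduct, Matrix.map_apply, Matrix.sub_apply,
      Matrix.of_apply, Matrix.diagonal_apply, Complex.ofReal_sub, Complex.ofReal_mul,
      sub_mul, Finset.sum_sub_distrib, Finset.mul_sum]
    congr 1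
    · apply Finset.sum_congr rfl
      intro j _
      ring
    · simp [apply_ite (fun x : ℝ => (x : ℂ)), ite_mul, Finset.sum_ite_eq]
  have key : ∀ y : Fin I → ℂ,
      (A.map (fun a : ℝ => (a : ℂ))).mulVec y = lam • y ↔
      ∀ i, (lam + (μ i : ℂ)) * y i = (v i : ℂ) * ∑ j, (μ j : ℂ) * y j := by
    intro y
    constructor
    · intro h i
      have := congrFun h i
      rw [entry] at this
      simp only [Pi.smul_apply, smul_eq_mul] at this
      linear_combination -this
    · intro h
      funext i
      rw [entry]
      simp only [Pi.smul_apply, smul_eq_mul]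
      linear_combination -(h i)
  constructor
  · rintro ⟨y, hy0, hy⟩
    rw [key] at hy
    set S : ℂ := ∑ j, (μ j : ℂ) * y j with hS
    have hyi : ∀ i, y i = (v i : ℂ) * S / (lam + (μ i : ℂ)) := by
      intro i
      rw [eq_div_iff (hne i)]
      linear_combination hy i
    have hSne : S ≠ 0 := by
      intro h
      apply hy0
      funext i
      rw [hyi i, h, mul_zero, zero_div]
      rfl
    have hmain : S = (∑ i, (v i : ℂ) * (μ i : ℂ) / (lam + (μ i : ℂ))) * S := by
      rw [hS, Finset.sum_mul]
      apply Finset.sum_congr rfl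
      intro i _
      rw [hyi i]
      field_simp
      ring
    have h1 : (∑ i, (v i : ℂ) * (μ i : ℂ) / (lam + (μ i : ℂ))) * S = 1 * S := by
      rw [one_mul]; exact hmain.symm
    exact mul_right_cancel₀ hSne h1
  · intro hsum
    refine ⟨fun i => (v i : ℂ) / (lam + (μ i : ℂ)), ?_, ?_⟩
    · intro h
      have := congrFun h ⟨0, hI⟩
      simp only [Pi.zero_apply, div_eq_zero_iff] at this
      rcases this with h1 | h1
      · exact (hv _).ne' (by exact_mod_cast h1)
      · exact hne _ h1
    · rw [key]
      intro i
      have hS : ∑ j, (μ j : ℂ) * ((v j : ℂ) / (lam + (μ j : ℂ))) = 1 := by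
        rw [← hsum]
        apply Finset.sum_congr rfl
        intro j _
        ring
      rw [hS, mul_one, mul_div_assoc', mul_comm, mul_div_assoc, div_self (hne i), mul_one]
end

section
/- Let A = v μᵀ − diag(μ) with μ_i > 0, v_i > 0, ∑ v_i = 1. Then for any initial condition y(0) ∈ ℝ^I, the solution y(t) = e^{At} y(0) of ẏ = A y converges as t → ∞ to y^∞ = (𝟙ᵀ y(0)) · (D^{-1}v)/(𝟙ᵀ D^{-1}v). -/
/-!
Write `v = a²` and `μ = b²`. Conjugation by `diag (a / b)` turns `A` into
`-(diag (b²) - (a b)(a b)ᵀ)`, which is negative semidefinite by Cauchy–Schwarz and `∑ a² = 1`;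
by the spectral theorem `e^{tA}` therefore converges to some `L`. Any such limit satisfies
`A L = 0` (differentiate `e^{sA} L = L` at `s = 0`), and `𝟙ᵀ L = 𝟙ᵀ` because the column sums of
`A` vanish, so those of `e^{tA}` are conserved. As `ker A` is spanned by `D⁻¹v`, this forces
`L = D⁻¹v 𝟙ᵀ / 𝟙ᵀD⁻¹v`.
-/

open Matrix BigOperators Filter

open NormedSpace Topology

section NormedAlgebra

variable {𝔸 : Type*} [NormedRing 𝔸] [NormedAlgebra ℝ 𝔸] [CompleteSpace 𝔸]

theorem exp_smul_mul_of_tendsto_exp_smul {x L : 𝔸}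
    (h : Tendsto (fun t : ℝ => exp (t • x)) atTop (𝓝 L)) (s : ℝ) :
    exp (s • x) * L = L := by
  let _ : NormedAlgebra ℚ 𝔸 := .restrictScalars ℚ ℝ 𝔸
  have hshift : Tendsto (fun t : ℝ => exp (s • x) * exp (t • x)) atTop (𝓝 L) := by
    simp_rw [← NormedSpace.exp_add_of_commute (((Commute.refl x).smul_left s).smul_right _),
      ← add_smul]
    exact h.comp (tendsto_atTop_add_const_left _ s tendsto_id)
  exact tendsto_nhds_unique (h.const_mul _) hshift

theorem mul_eq_zero_of_tendsto_exp_smul {x L : 𝔸}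
    (h : Tendsto (fun t : ℝ => exp (t • x)) atTop (𝓝 L)) : x * L = 0 := by
  have hderiv : HasDerivAt (fun s : ℝ => exp (s • x) * L) (x * L) 0 := by
    simpa using (hasDerivAt_exp_smul_const' x (0 : ℝ)).mul_const L
  simp_rw [exp_smul_mul_of_tendsto_exp_smul h] at hderiv
  exact hderiv.unique (hasDerivAt_const 0 L)

theorem mul_exp_smul_eq_self_of_mul_eq_zero {x y : 𝔸} (h : y * x = 0) (t : ℝ) :
    y * exp (t • x) = y := by
  have hderiv (s : ℝ) : HasDerivAt (fun s : ℝ => y * exp (s • x)) 0 s := by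
    simpa [← mul_assoc, h] using (hasDerivAt_exp_smul_const' x s).const_mul y
  simpa using is_const_of_deriv_eq_zero (fun s => (hderiv s).differentiableAt)
    (fun s => (hderiv s).deriv) t 0

theorem tendsto_exp_smul_units_conj {x L : 𝔸} (u : 𝔸ˣ)
    (h : Tendsto (fun t : ℝ => exp (t • x)) atTop (𝓝 L)) :
    Tendsto (fun t : ℝ => exp (t • (u * x * ↑u⁻¹))) atTop (𝓝 (u * L * ↑u⁻¹)) := by
  let _ : NormedAlgebra ℚ 𝔸 := .restrictScalars ℚ ℝ 𝔸
  have hconj (t : ℝ) : t • (↑u * x * ↑u⁻¹) = ↑u * (t • x) * ↑u⁻¹ := by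
    rw [mul_smul_comm, smul_mul_assoc]
  simp_rw [hconj, NormedSpace.exp_units_conj]
  exact (h.const_mul _).mul_const _

end NormedAlgebra

namespace Matrix

open scoped Matrix.Norms.Operator

variable {n : Type*} [Fintype n] [DecidableEq n]

theorem tendsto_exp_smul_neg_diagonal {d : n → ℝ} (hd : ∀ k, 0 ≤ d k) :
    Tendsto (fun t : ℝ => exp (t • -diagonal d)) atTop
      (𝓝 (diagonal fun k => if d k = 0 then 1 else 0)) := by
  have hentry (k : n) :
      Tendsto (fun t : ℝ => Real.exp (-(t * d k))) atTop (𝓝 (if d k = 0 then 1 else 0)) := by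
    rcases (hd k).eq_or_lt with hk | hk
    · simp [← hk]
    · rw [if_neg hk.ne']
      exact Real.tendsto_exp_atBot.comp
        (tendsto_neg_atTop_atBot.comp (tendsto_id.atTop_mul_const hk))
  have hexp (t : ℝ) : exp (t • -diagonal d) = diagonal fun k => Real.exp (-(t * d k)) := by
    simp [diagonal_neg, ← diagonal_smul, exp_diagonal, Pi.exp_def, Real.exp_eq_exp_ℝ]
  simp_rw [hexp]
  exact (continuous_id.matrix_diagonal.tendsto _).comp (tendsto_pi_nhds.2 hentry)

theorem PosSemidef.exists_tendsto_exp_smul_neg {P : Matrix n n ℝ} (hP : P.PosSemidef) :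
    ∃ L, Tendsto (fun t : ℝ => exp (t • -P)) atTop (𝓝 L) := by
  let U := Unitary.toUnits hP.1.eigenvectorUnitary
  have hspec :
      -P = (U * -diagonal hP.1.eigenvalues * (U⁻¹ : (Matrix n n ℝ)ˣ) : Matrix n n ℝ) := by
    conv_lhs => rw [hP.1.spectral_theorem]
    simp only [RCLike.ofReal_real_eq_id, CompTriple.comp_eq, Unitary.conjStarAlgAut_apply,
      Unitary.val_toUnits_apply, Unitary.val_inv_toUnits_apply, UnitaryGroup.inv_val, U,
      mul_neg, neg_mul]
  rw [hspec]
  exact ⟨_, tendsto_exp_smul_units_conj U (tendsto_exp_smul_neg_diagonal hP.eigenvalues_nonneg)⟩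

theorem posSemidef_diagonal_sq_sub_vecMulVec {a b : n → ℝ} (ha : ∑ i, a i ^ 2 ≤ 1) :
    (diagonal (b ^ 2) - vecMulVec (a * b) (a * b)).PosSemidef := by
  refine .of_dotProduct_mulVec_nonneg
    ((isHermitian_diagonal _).sub (posSemidef_vecMulVec_self_star (a * b)).1) fun x => ?_
  have hform : star x ⬝ᵥ ((diagonal (b ^ 2) - vecMulVec (a * b) (a * b)) *ᵥ x) =
      ∑ i, (b i * x i) ^ 2 - (∑ i, a i * (b i * x i)) ^ 2 := by
    simp only [sub_mulVec, vecMulVec_mulVec, star_trivial, dotProduct_sub]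
    simp only [dotProduct, mulVec_diagonal, Pi.mul_apply, Pi.smul_apply,
      MulOpposite.smul_eq_mul_unop, MulOpposite.unop_op, sq, Finset.sum_mul, Finset.mul_sum]
    congr 1
    · exact Finset.sum_congr rfl fun i _ => by ring
    · exact Finset.sum_congr rfl fun i _ => Finset.sum_congr rfl fun j _ => by ring
  rw [hform, sub_nonneg]
  calc (∑ i, a i * (b i * x i)) ^ 2 ≤ (∑ i, a i ^ 2) * ∑ i, (b i * x i) ^ 2 :=
        Finset.sum_mul_sq_le_sq_mul_sq Finset.univ a (b * x)
    _ ≤ ∑ i, (b i * x i) ^ 2 := mul_le_of_le_one_left (by positivity) ha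

theorem vecMulVec_sq_sub_diagonal_sq_eq_conj {a b : n → ℝ} (ha : ∀ i, a i ≠ 0)
    (hb : ∀ i, b i ≠ 0) :
    vecMulVec (a ^ 2) (b ^ 2) - diagonal (b ^ 2) =
      diagonal (a / b) * -(diagonal (b ^ 2) - vecMulVec (a * b) (a * b)) * diagonal (b / a) := by
  ext i j
  rcases eq_or_ne i j with rfl | hij
  · simp only [sub_apply, vecMulVec_apply, Pi.pow_apply, diagonal_apply_eq, neg_sub,
      mul_diagonal, diagonal_mul, Pi.div_apply, Pi.mul_apply]
    field_simp [ha i, hb i]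
  · simp only [sub_apply, vecMulVec_apply, Pi.pow_apply, diagonal_apply_ne _ hij, sub_zero,
      neg_sub, mul_diagonal, diagonal_mul, Pi.div_apply, Pi.mul_apply]
    field_simp [ha j, hb i]

variable {v μ : n → ℝ}

theorem eq_smul_of_vecMulVec_sub_diagonal_mulVec_eq_zero (hμ : ∀ i, μ i ≠ 0) {x : n → ℝ}
    (hx : (vecMulVec v μ - diagonal μ) *ᵥ x = 0) : x = (μ ⬝ᵥ x) • (v / μ) := by
  ext i
  have hi := congrFun hx i
  simp only [sub_mulVec, vecMulVec_mulVec, mulVec_diagonal, Pi.sub_apply, Pi.smul_apply,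
    MulOpposite.smul_eq_mul_unop, MulOpposite.unop_op, Pi.zero_apply, sub_eq_zero] at hi
  simp only [Pi.smul_apply, Pi.div_apply, smul_eq_mul]
  field_simp [hμ i]
  linarith

theorem ones_mul_vecMulVec_sub_diagonal_eq_zero (hv : ∑ i, v i = 1) :
    of (fun _ _ => 1 : n → n → ℝ) * (vecMulVec v μ - diagonal μ) = 0 := by
  ext i j
  simp [mul_apply, vecMulVec_apply, diagonal_apply, Finset.sum_sub_distrib, ← Finset.sum_mul, hv]

theorem eq_of_vecMulVec_sub_diagonal_mul_eq_zero (hμ : ∀ i, μ i ≠ 0)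
    {L : Matrix n n ℝ} (hAL : (vecMulVec v μ - diagonal μ) * L = 0)
    (hJL : of (fun _ _ => 1 : n → n → ℝ) * L = of fun _ _ => 1) :
    L = (∑ i, v i / μ i)⁻¹ • vecMulVec (v / μ) 1 := by
  ext i j
  have hcol := eq_smul_of_vecMulVec_sub_diagonal_mulVec_eq_zero hμ
    (x := fun k => L k j) (funext fun k => congrFun (congrFun hAL k) j)
  have hsum : ∑ k, L k j = 1 := by simpa [mul_apply] using congrFun (congrFun hJL i) j
  set c := μ ⬝ᵥ fun k => L k j
  have hc : c = (∑ i, v i / μ i)⁻¹ := by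
    refine eq_inv_of_mul_eq_one_left ?_
    rw [Finset.mul_sum, ← hsum]
    exact Finset.sum_congr rfl fun k _ => (congrFun hcol k).symm
  simpa [hc] using congrFun hcol i

theorem exists_tendsto_exp_smul_vecMulVec_sub_diagonal (hμ : ∀ i, 0 < μ i) (hv : ∀ i, 0 < v i)
    (hvsum : ∑ i, v i = 1) :
    ∃ L, Tendsto (fun t : ℝ => exp (t • (vecMulVec v μ - diagonal μ))) atTop (𝓝 L) := by
  set a : n → ℝ := fun i => √(v i)
  set b : n → ℝ := fun i => √(μ i)
  have ha : ∀ i, a i ≠ 0 := fun i => (Real.sqrt_pos.2 (hv i)).ne'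
  have hb : ∀ i, b i ≠ 0 := fun i => (Real.sqrt_pos.2 (hμ i)).ne'
  have hva : v = a ^ 2 := funext fun i => (Real.sq_sqrt (hv i).le).symm
  have hμb : μ = b ^ 2 := funext fun i => (Real.sq_sqrt (hμ i).le).symm
  let S : (Matrix n n ℝ)ˣ :=
    ⟨diagonal (a / b), diagonal (b / a), by simp [field, ha, hb], by simp [field, ha, hb]⟩
  have ha_sum : ∑ i, a i ^ 2 ≤ 1 := (by simpa [hva] using hvsum : ∑ i, a i ^ 2 = 1).le
  obtain ⟨L, hL⟩ :=
    (posSemidef_diagonal_sq_sub_vecMulVec (b := b) ha_sum).exists_tendsto_exp_smul_neg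
  rw [hva, hμb, vecMulVec_sq_sub_diagonal_sq_eq_conj ha hb]
  exact ⟨_, tendsto_exp_smul_units_conj S hL⟩

theorem tendsto_exp_smul_vecMulVec_sub_diagonal (hμ : ∀ i, 0 < μ i) (hv : ∀ i, 0 < v i)
    (hvsum : ∑ i, v i = 1) :
    Tendsto (fun t : ℝ => exp (t • (vecMulVec v μ - diagonal μ))) atTop
      (𝓝 ((∑ i, v i / μ i)⁻¹ • vecMulVec (v / μ) 1)) := by
  obtain ⟨L, hL⟩ := exists_tendsto_exp_smul_vecMulVec_sub_diagonal hμ hv hvsum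
  have hJL : of (fun _ _ => 1 : n → n → ℝ) * L = of fun _ _ => 1 :=
    tendsto_nhds_unique (hL.const_mul _) <| tendsto_const_nhds.congr fun t =>
      (mul_exp_smul_eq_self_of_mul_eq_zero (ones_mul_vecMulVec_sub_diagonal_eq_zero hvsum) t).symm
  rwa [← eq_of_vecMulVec_sub_diagonal_mul_eq_zero (fun i => (hμ i).ne')
    (mul_eq_zero_of_tendsto_exp_smul hL) hJL]

end Matrix

theorem exp_At_mulVec_tendsto_general
    (I : ℕ) (μ v : Fin I → ℝ)
    (hμ : ∀ i, 0 < μ i) (hv : ∀ i, 0 < v i) (hvsum : ∑ i, v i = 1)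
    (A : Matrix (Fin I) (Fin I) ℝ)
    (hA : A = Matrix.of (fun i j => v i * μ j) - Matrix.diagonal μ)
    (y0 : Fin I → ℝ) (yinf : Fin I → ℝ)
    (hyinf : yinf = fun i => (∑ j, y0 j) * (v i / μ i) / (∑ j, v j / μ j)) :
    Tendsto (fun t : ℝ => (NormedSpace.exp (t • A)).mulVec y0) atTop (nhds yinf) := by
  have hlimit : ((∑ i, v i / μ i)⁻¹ • vecMulVec (v / μ) 1) *ᵥ y0 = yinf := by
    ext i
    simp only [hyinf, smul_mulVec, vecMulVec_mulVec, one_dotProduct, Pi.smul_apply, smul_eq_mul,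
      MulOpposite.smul_eq_mul_unop, MulOpposite.unop_op, Pi.div_apply]
    ring
  rw [← hlimit, hA]
  exact ((continuous_id.matrix_mulVec continuous_const).tendsto _).comp
    (tendsto_exp_smul_vecMulVec_sub_diagonal hμ hv hvsum)

/-- the solution `y(t) = e^{At} y(0)` of `ẏ = A y` converges as `t → ∞`
to `(𝟙ᵀ y(0)) • (D⁻¹v)/(𝟙ᵀ D⁻¹ v)`. -/
theorem exp_At_mulVec_tendsto
    (I : ℕ) (hI : 0 < I) (μ v : Fin I → ℝ)
    (hμ : ∀ i, 0 < μ i) (hv : ∀ i, 0 < v i) (hvsum : ∑ i, v i = 1)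
    (A : Matrix (Fin I) (Fin I) ℝ)
    (hA : A = Matrix.of (fun i j => v i * μ j) - Matrix.diagonal μ)
    (y0 : Fin I → ℝ) (yinf : Fin I → ℝ)
    (hyinf : yinf = fun i => (∑ j, y0 j) * (v i / μ i) / (∑ j, v j / μ j)) :
    Tendsto (fun t : ℝ => (NormedSpace.exp (t • A)).mulVec y0) atTop (nhds yinf) :=
  exp_At_mulVec_tendsto_general I μ v hμ hv hvsum A hA y0 yinf hyinf
end

section
/- Consider the linear program: maximize ∑_i w_i(μ_{m,i} y_{m,i} + μ_{s,i} y_{s,i}) over nonnegative variables (x_i, y_{m,i}, y_{s,i}, q_{p,i}, q_{d,i}), subject to ∑_i x_i ≤ 1, ∑_i y_{m,i} ≤ (B−1)∑_i x_i, ∑_i y_{s,i} ≤ B(1 − ∑_i x_i), λ_i − θ_i q_{p,i} = μ_{p,i} x_i for all i, and μ_{p,i} x_i − θ_i q_{d,i} = μ_{m,i} y_{m,i} + μ_{s,i} y_{s,i} for all i. Suppose μ_{m,i} = 1/(D_i τ) and μ_{s,i} = γ/D_i with γτ ≥ (B−1)/B. Then the LP admits an optimal solution with q_{d,i} = 0 for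 all i. -/
open BigOperators

/-- Feasibility for the steady-state fluid LP. -/
def LPFeasible (I B : ℕ) (lam θ μp μm μs : Fin I → ℝ)
    (x ym ys qp qd : Fin I → ℝ) : Prop :=
  (∀ i, 0 ≤ x i) ∧ (∀ i, 0 ≤ ym i) ∧ (∀ i, 0 ≤ ys i) ∧
  (∀ i, 0 ≤ qp i) ∧ (∀ i, 0 ≤ qd i) ∧
  (∑ i, x i ≤ 1) ∧
  (∑ i, ym i ≤ ((B : ℝ) - 1) * ∑ i, x i) ∧
  (∑ i, ys i ≤ (B : ℝ) * (1 - ∑ i, x i)) ∧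
  (∀ i, lam i - θ i * qp i = μp i * x i) ∧
  (∀ i, μp i * x i - θ i * qd i = μm i * ym i + μs i * ys i)

/-!
Draining the decode buffer: a feasible point keeps its per-class throughput
`r i = μm i * ym i + μs i * ys i` if we lower `x i` to `r i / μp i` and move the decode queue
`qd i` into the prefill queue. This frees prefill capacity `s - s'`, where `s, s'` are the total
prefill shares before and after, but the mixed-decode budget `(B - 1) * s'` may now be exceeded.
The excess mixed decode is moved to solo decode at exchange rate `κ = γτ` (`μs = κ μm`), which
costs at most `(B - 1) (s - s') / κ ≤ B (s - s')` solo slots, exactly the freed capacity.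
Hence every feasible value is attained with `qd = 0`, and the zero-buffer feasible set is a
nonempty compact polytope, on which the continuous objective attains its maximum.
-/

lemma exists_mul_eq_min {S T : ℝ} (hS : 0 ≤ S) (hT : 0 ≤ T) :
    ∃ t : ℝ, 0 ≤ t ∧ t ≤ 1 ∧ t * S = min S T := by
  rcases le_or_gt S T with hST | hTS
  · exact ⟨1, zero_le_one, le_rfl, by rw [one_mul, min_eq_left hST]⟩
  · refine ⟨T / S, by positivity, (div_le_one₀ (hT.trans_lt hTS)).2 hTS.le, ?_⟩
    rw [min_eq_right hTS.le, div_mul_cancel₀ _ (hT.trans_lt hTS).ne']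

lemma exists_shift_mixed_to_solo {ι : Type*} [Fintype ι] {b κ s s' : ℝ} {μm μs ym ys : ι → ℝ}
    (hb : 1 ≤ b) (hκ : 0 < κ) (hbκ : b - 1 ≤ b * κ) (hμs : ∀ i, μs i = κ * μm i)
    (hym : ∀ i, 0 ≤ ym i) (hys : ∀ i, 0 ≤ ys i) (hs' : 0 ≤ s') (hs's : s' ≤ s)
    (hyms : ∑ i, ym i ≤ (b - 1) * s) (hyss : ∑ i, ys i ≤ b * (1 - s)) :
    ∃ ym' ys' : ι → ℝ, (∀ i, 0 ≤ ym' i) ∧ (∀ i, 0 ≤ ys' i) ∧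
      ∑ i, ym' i ≤ (b - 1) * s' ∧ ∑ i, ys' i ≤ b * (1 - s') ∧
      ∀ i, μm i * ym' i + μs i * ys' i = μm i * ym i + μs i * ys i := by
  set S := ∑ i, ym i
  obtain ⟨t, ht0, ht1, htS⟩ :=
    exists_mul_eq_min (Finset.sum_nonneg fun i _ => hym i) (mul_nonneg (sub_nonneg.2 hb) hs')
  have hshift : (1 - t) * S ≤ (b - 1) * (s - s') := by
    rcases min_cases S ((b - 1) * s') with ⟨h, -⟩ | ⟨h, -⟩ <;> nlinarith
  have hsolo : (1 - t) * S / κ ≤ b * (s - s') := by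
    rw [div_le_iff₀ hκ]; nlinarith
  refine ⟨fun i => t * ym i, fun i => ys i + (1 - t) * ym i / κ,
    fun i => mul_nonneg ht0 (hym i),
    fun i => add_nonneg (hys i) (div_nonneg (mul_nonneg (by linarith) (hym i)) hκ.le),
    ?_, ?_, fun i => ?_⟩
  · rw [← Finset.mul_sum, htS]
    exact min_le_right _ _
  · rw [Finset.sum_add_distrib, ← Finset.sum_div, ← Finset.mul_sum]
    linarith
  · rw [hμs]
    field_simp
    ring

section ZeroDecode

variable {I B : ℕ} {lam θ μp μm μs : Fin I → ℝ}

lemma exists_feasible_zero_decode_of_feasible {κ : ℝ} (hB : 1 ≤ B) (hκ : 0 < κ)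
    (hBκ : (B : ℝ) - 1 ≤ B * κ) (hθ : ∀ i, 0 ≤ θ i) (hμp : ∀ i, 0 < μp i)
    (hμm : ∀ i, 0 ≤ μm i) (hμs : ∀ i, μs i = κ * μm i) {x ym ys qp qd : Fin I → ℝ}
    (h : LPFeasible I B lam θ μp μm μs x ym ys qp qd) :
    ∃ x' ym' ys' qp' : Fin I → ℝ, LPFeasible I B lam θ μp μm μs x' ym' ys' qp' 0 ∧
      ∀ i, μm i * ym' i + μs i * ys' i = μm i * ym i + μs i * ys i := by
  obtain ⟨hx, hym, hys, hqp, hqd, hxs, hyms, hyss, hprefill, hdecode⟩ := h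
  set r : Fin I → ℝ := fun i => μm i * ym i + μs i * ys i
  have hdecode' : ∀ i, μp i * x i - θ i * qd i = r i := hdecode
  have hr : ∀ i, 0 ≤ r i := fun i =>
    add_nonneg (mul_nonneg (hμm i) (hym i))
      (mul_nonneg (by rw [hμs]; exact mul_nonneg hκ.le (hμm i)) (hys i))
  have hμpx' : ∀ i, μp i * (r i / μp i) = r i := fun i => mul_div_cancel₀ _ (hμp i).ne'
  have hx'x : ∀ i, r i / μp i ≤ x i := fun i => by
    rw [div_le_iff₀' (hμp i), ← hdecode' i]
    nlinarith [mul_nonneg (hθ i) (hqd i)]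
  have hx' : ∀ i, 0 ≤ r i / μp i := fun i => div_nonneg (hr i) (hμp i).le
  have hsum : ∑ i, r i / μp i ≤ ∑ i, x i := Finset.sum_le_sum fun i _ => hx'x i
  obtain ⟨ym', ys', hym', hys', hyms', hyss', hthroughput⟩ :=
    exists_shift_mixed_to_solo (by exact_mod_cast hB) hκ hBκ hμs hym hys
      (Finset.sum_nonneg fun i _ => hx' i) hsum hyms hyss
  refine ⟨fun i => r i / μp i, ym', ys', qp + qd,
    ⟨hx', hym', hys', fun i => add_nonneg (hqp i) (hqd i), fun _ => le_rfl,
      hsum.trans hxs, hyms', hyss', fun i => ?_, fun i => ?_⟩, hthroughput⟩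
  · simp only [Pi.add_apply, hμpx']
    linarith [hprefill i, hdecode' i]
  · simp only [Pi.zero_apply, hμpx', hthroughput i]
    ring

variable (I B lam θ μp μm μs) in
def zeroDecodeFeasibleSet : Set ((Fin I → ℝ) × (Fin I → ℝ) × (Fin I → ℝ) × (Fin I → ℝ)) :=
  {p | LPFeasible I B lam θ μp μm μs p.1 p.2.1 p.2.2.1 p.2.2.2 0}

lemma zeroDecodeFeasibleSet_nonempty (hlam : ∀ i, 0 ≤ lam i) (hθ : ∀ i, 0 < θ i) :
    (zeroDecodeFeasibleSet I B lam θ μp μm μs).Nonempty := by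
  refine ⟨(0, 0, 0, fun i => lam i / θ i), fun _ => le_rfl, fun _ => le_rfl, fun _ => le_rfl,
    fun i => div_nonneg (hlam i) (hθ i).le, fun _ => le_rfl, ?_, ?_, ?_, fun i => ?_, fun i => ?_⟩
  all_goals simp [mul_div_cancel₀ _ (hθ _).ne']

lemma isClosed_zeroDecodeFeasibleSet : IsClosed (zeroDecodeFeasibleSet I B lam θ μp μm μs) := by
  simp only [zeroDecodeFeasibleSet, LPFeasible, Set.ofPred_and, Set.ofPred_forall]
  repeat' apply IsClosed.inter
  all_goals first
    | exact isClosed_iInter fun i => isClosed_le (by fun_prop) (by fun_prop)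
    | exact isClosed_iInter fun i => isClosed_eq (by fun_prop) (by fun_prop)
    | exact isClosed_le (by fun_prop) (by fun_prop)

lemma zeroDecodeFeasibleSet_subset_Icc (hθ : ∀ i, 0 < θ i) (hμp : ∀ i, 0 ≤ μp i) :
    zeroDecodeFeasibleSet I B lam θ μp μm μs ⊆
      Set.Icc 0 (fun _ => 1, fun _ => (B : ℝ), fun _ => (B : ℝ), fun i => lam i / θ i) := by
  rintro ⟨x, ym, ys, qp⟩ ⟨hx, hym, hys, hqp, -, hxs, hyms, hyss, hprefill, -⟩
  have hxs0 : 0 ≤ ∑ i, x i := Finset.sum_nonneg fun i _ => hx i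
  have hB : (0 : ℝ) ≤ B := B.cast_nonneg
  refine ⟨⟨hx, hym, hys, hqp⟩, fun i => ?_, fun i => ?_, fun i => ?_, fun i => ?_⟩
  · exact (Finset.single_le_sum (fun j _ => hx j) (Finset.mem_univ i)).trans hxs
  · have := Finset.single_le_sum (fun j _ => hym j) (Finset.mem_univ i)
    show ym i ≤ B
    nlinarith
  · have := Finset.single_le_sum (fun j _ => hys j) (Finset.mem_univ i)
    show ys i ≤ B
    nlinarith
  · show qp i ≤ lam i / θ i
    rw [le_div_iff₀ (hθ i)]
    nlinarith [hprefill i, mul_nonneg (hμp i) (hx i)]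

lemma isCompact_zeroDecodeFeasibleSet (hθ : ∀ i, 0 < θ i) (hμp : ∀ i, 0 ≤ μp i) :
    IsCompact (zeroDecodeFeasibleSet I B lam θ μp μm μs) :=
  isCompact_Icc.of_isClosed_subset isClosed_zeroDecodeFeasibleSet
    (zeroDecodeFeasibleSet_subset_Icc hθ hμp)

end ZeroDecode

theorem lp_admits_optimal_with_zero_decode_buffer_general
    (I B : ℕ) (hB : 1 ≤ B)
    (w lam θ μp μm μs D : Fin I → ℝ) (τ γ : ℝ)
    (hlam : ∀ i, 0 < lam i) (hθ : ∀ i, 0 < θ i)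
    (hμp : ∀ i, 0 < μp i) (hD : ∀ i, 0 < D i) (hτ : 0 < τ) (hγ : 0 < γ)
    (hμm : ∀ i, μm i = 1 / (D i * τ)) (hμs : ∀ i, μs i = γ / D i)
    (hcond : γ * τ ≥ ((B : ℝ) - 1) / (B : ℝ)) :
    ∃ x ym ys qp qd : Fin I → ℝ,
      LPFeasible I B lam θ μp μm μs x ym ys qp qd ∧
      (∀ i, qd i = 0) ∧
      ∀ x' ym' ys' qp' qd' : Fin I → ℝ,
        LPFeasible I B lam θ μp μm μs x' ym' ys' qp' qd' →
          ∑ i, w i * (μm i * ym' i + μs i * ys' i) ≤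
            ∑ i, w i * (μm i * ym i + μs i * ys i) := by
  have hBκ : (B : ℝ) - 1 ≤ B * (γ * τ) := by
    rwa [ge_iff_le, div_le_iff₀ (by exact_mod_cast hB), mul_comm] at hcond
  have hμm0 : ∀ i, 0 ≤ μm i := fun i => by
    rw [hμm]; have := hD i; positivity
  have hμsμm : ∀ i, μs i = γ * τ * μm i := fun i => by
    rw [hμs, hμm]; field_simp [(hD i).ne', hτ.ne']
  obtain ⟨p, hp, hmax⟩ := (isCompact_zeroDecodeFeasibleSet hθ fun i => (hμp i).le).exists_isMaxOn
    (zeroDecodeFeasibleSet_nonempty (fun i => (hlam i).le) hθ)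
    (f := fun p => ∑ i, w i * (μm i * p.2.1 i + μs i * p.2.2.1 i)) (by fun_prop)
  refine ⟨p.1, p.2.1, p.2.2.1, p.2.2.2, 0, hp, fun _ => rfl, fun x' ym' ys' qp' qd' h => ?_⟩
  obtain ⟨x'', ym'', ys'', qp'', h', hthroughput⟩ :=
    exists_feasible_zero_decode_of_feasible hB (mul_pos hγ hτ) hBκ (fun i => (hθ i).le) hμp
      hμm0 hμsμm h
  calc ∑ i, w i * (μm i * ym' i + μs i * ys' i)
      = ∑ i, w i * (μm i * ym'' i + μs i * ys'' i) := by simp only [hthroughput]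
    _ ≤ _ := hmax (a := (x'', ym'', ys'', qp'')) h'

/-- under `γτ ≥ (B−1)/B`, the steady-state fluid LP admits an optimal
solution with empty decode buffer, `q_{d,i} = 0` for all `i`. -/
theorem lp_admits_optimal_with_zero_decode_buffer
    (I B : ℕ) (hB : 1 ≤ B)
    (w lam θ μp μm μs D : Fin I → ℝ) (τ γ : ℝ)
    (hw : ∀ i, 0 < w i) (hlam : ∀ i, 0 < lam i) (hθ : ∀ i, 0 < θ i)
    (hμp : ∀ i, 0 < μp i) (hD : ∀ i, 0 < D i) (hτ : 0 < τ) (hγ : 0 < γ)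
    (hμm : ∀ i, μm i = 1 / (D i * τ)) (hμs : ∀ i, μs i = γ / D i)
    (hcond : γ * τ ≥ ((B : ℝ) - 1) / (B : ℝ)) :
    ∃ x ym ys qp qd : Fin I → ℝ,
      LPFeasible I B lam θ μp μm μs x ym ys qp qd ∧
      (∀ i, qd i = 0) ∧
      ∀ x' ym' ys' qp' qd' : Fin I → ℝ,
        LPFeasible I B lam θ μp μm μs x' ym' ys' qp' qd' →
          ∑ i, w i * (μm i * ym' i + μs i * ys' i) ≤
            ∑ i, w i * (μm i * ym i + μs i * ys i) :=
  lp_admits_optimal_with_zero_decode_buffer_general I B hB w lam θ μp μm μs D τ γ hlam hθ hμp hD hτ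
    hγ hμm hμs hcond
end
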